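/- arXiv:1802.03713 — 5 statements merged into one kernel-verified Lean document; each statement's English description precedes it below -/
import Mathlib

section
/- The structure matrix of a fully connected two-layer network (complete bipartite-through-hidden paths): for a network with d inputs, h hidden nodes, and K outputs, the d·K·h path vectors in {0,1}^{(d+K)h} (indicator vectors of the two edges each path uses), viewed over the rationals, span a subspace of dimension dh + Kh − h. Equivalently, the rank of the matrix whose columns are the path indicator vectors is m − H where m = (d+K)h is the number of weights and H = h is the number of hidden nodes. -/
/-- Edges of a fully connected network with `d` inputs, `h` hidden nodes and `K`
outputs: first-layer edges `(i,j)` and second-layer edges `(j,k)`. -/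
abbrev TwoLayerEdge (d h K : ℕ) := (Fin d × Fin h) ⊕ (Fin h × Fin K)

/-- The indicator vector of the path `(i, j, k)`: it has a `1` exactly in the
coordinates of the two edges `(i,j)` and `(j,k)` it uses. -/
def pathVec (d h K : ℕ) (p : Fin d × Fin h × Fin K) : TwoLayerEdge d h K → ℚ :=
  fun e =>
    if e = Sum.inl (p.1, p.2.1) ∨ e = Sum.inr (p.2.1, p.2.2) then 1 else 0

/-- The structure matrix: its columns are the path indicator vectors. -/
def structMatrix (d h K : ℕ) :
    Matrix (TwoLayerEdge d h K) (Fin d × Fin h × Fin K) ℚ :=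
  fun e p => pathVec d h K p e

/-! Flow conservation at the hidden nodes cuts out the span of the paths: every path carries equal
weight into and out of its hidden node, and conversely a balanced weighting `w` is the combination
of paths that routes each first-layer weight `w (i, j)` on to a fixed output `k₀`, each second-layer
weight `w (j, k)` back from a fixed input `i₀`, and removes the path `(i₀, j, k₀)` counted twice by
the total flow through `j`. The balance map onto `ℚ^h` is surjective, so rank–nullity gives
`dh + hK − h`. -/

def hiddenBalance (d h K : ℕ) : (TwoLayerEdge d h K → ℚ) →ₗ[ℚ] (Fin h → ℚ) where
  toFun w j := ∑ i, w (.inl (i, j)) - ∑ k, w (.inr (j, k))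
  map_add' x y := by
    funext j
    simp only [Pi.add_apply, Finset.sum_add_distrib]
    ring
  map_smul' c x := by
    funext j
    simp [Finset.mul_sum, mul_sub]

variable {d h K : ℕ}

lemma hiddenBalance_apply (w : TwoLayerEdge d h K → ℚ) (j : Fin h) :
    hiddenBalance d h K w j = ∑ i, w (.inl (i, j)) - ∑ k, w (.inr (j, k)) :=
  rfl

lemma hiddenBalance_pathVec (p : Fin d × Fin h × Fin K) :
    hiddenBalance d h K (pathVec d h K p) = 0 := by
  obtain ⟨i₀, j₀, k₀⟩ := p
  funext j
  by_cases hj : j = j₀ <;> simp [hiddenBalance_apply, pathVec, Prod.ext_iff, hj]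

lemma eq_pathVec_combination_of_hiddenBalance_eq_zero (i₀ : Fin d) (k₀ : Fin K)
    {w : TwoLayerEdge d h K → ℚ} (hw : hiddenBalance d h K w = 0) :
    w = (∑ i, ∑ j, w (.inl (i, j)) • pathVec d h K (i, j, k₀))
      + (∑ j, ∑ k, w (.inr (j, k)) • pathVec d h K (i₀, j, k))
      - ∑ j, (∑ i, w (.inl (i, j))) • pathVec d h K (i₀, j, k₀) := by
  have hbal (j : Fin h) : ∑ i, w (.inl (i, j)) = ∑ k, w (.inr (j, k)) :=
    sub_eq_zero.1 (congrFun hw j)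
  funext e
  rcases e with ⟨i, j⟩ | ⟨j, k⟩ <;>
    simp [pathVec, Prod.ext_iff, Finset.sum_apply, ite_and, Finset.sum_ite_eq, mul_ite]
  by_cases hi : i = i₀ <;> simp [hi, hbal j]

lemma span_pathVec_eq_ker_hiddenBalance (i₀ : Fin d) (k₀ : Fin K) :
    Submodule.span ℚ (Set.range (pathVec d h K)) = LinearMap.ker (hiddenBalance d h K) := by
  refine le_antisymm (Submodule.span_le.2 ?_) fun w hw => ?_
  · rintro _ ⟨p, rfl⟩
    exact hiddenBalance_pathVec p
  have hmem (p) : pathVec d h K p ∈ Submodule.span ℚ (Set.range (pathVec d h K)) :=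
    Submodule.subset_span ⟨p, rfl⟩
  rw [eq_pathVec_combination_of_hiddenBalance_eq_zero i₀ k₀ hw]
  refine Submodule.sub_mem _ (Submodule.add_mem _ ?_ ?_) ?_
  · exact Submodule.sum_mem _ fun _ _ =>
      Submodule.sum_mem _ fun _ _ => Submodule.smul_mem _ _ (hmem _)
  · exact Submodule.sum_mem _ fun _ _ =>
      Submodule.sum_mem _ fun _ _ => Submodule.smul_mem _ _ (hmem _)
  · exact Submodule.sum_mem _ fun _ _ => Submodule.smul_mem _ _ (hmem _)

lemma hiddenBalance_surjective (i₀ : Fin d) : Function.Surjective (hiddenBalance d h K) := by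
  intro v
  refine ⟨Sum.elim (fun e => if e.1 = i₀ then v e.2 else 0) 0, ?_⟩
  funext j
  simp [hiddenBalance_apply]

lemma finrank_span_pathVec (i₀ : Fin d) (k₀ : Fin K) :
    Module.finrank ℚ (Submodule.span ℚ (Set.range (pathVec d h K))) = d * h + K * h - h := by
  have hrank := LinearMap.finrank_range_add_finrank_ker (hiddenBalance d h K)
  rw [LinearMap.range_eq_top.2 (hiddenBalance_surjective i₀), finrank_top] at hrank
  simp only [Module.finrank_fintype_fun_eq_card, Fintype.card_sum, Fintype.card_prod,
    Fintype.card_fin] at hrank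
  rw [span_pathVec_eq_ker_hiddenBalance i₀ k₀, Nat.mul_comm K]
  omega

theorem two_layer_structure_matrix_rank_general (d h K : ℕ)
    (hd : 1 ≤ d) (hK : 1 ≤ K) :
    Module.finrank ℚ (Submodule.span ℚ (Set.range (pathVec d h K))) = d * h + K * h - h ∧
      (structMatrix d h K).rank = (d + K) * h - h := by
  have hspan := finrank_span_pathVec (h := h) (⟨0, hd⟩ : Fin d) (⟨0, hK⟩ : Fin K)
  refine ⟨hspan, ?_⟩
  rw [Matrix.rank_eq_finrank_span_cols, Nat.add_mul]
  exact hspan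

/-- for a fully connected two-layer network with `d` inputs, `h` hidden
nodes and `K` outputs, the `d·h·K` path indicator vectors span a subspace of `ℚ^m`
(`m = dh + hK`) of dimension `dh + Kh − h`; equivalently the structure matrix has
rank `m − H` with `H = h`. -/
theorem two_layer_structure_matrix_rank (d h K : ℕ)
    (hd : 1 ≤ d) (hh : 1 ≤ h) (hK : 1 ≤ K) :
    Module.finrank ℚ (Submodule.span ℚ (Set.range (pathVec d h K))) = d * h + K * h - h ∧
      (structMatrix d h K).rank = (d + K) * h - h :=
  two_layer_structure_matrix_rank_general d h K hd hK
end

section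
/- For an L-layer MLP with layer widths h_0, h_1, ..., h_L (all at least 1, with L ≥ 2), the rank over Q of the structure matrix, whose columns are the edge-indicator vectors of all input-to-output paths, equals m − H, where m = Σ_{l=1}^{L} h_{l−1} h_l is the number of weights and H = Σ_{l=1}^{L−1} h_l is the number of hidden nodes. -/
/-- Edges of a fully connected `L`-layer MLP with layer widths `h`: an edge is a
layer index `l < L` together with a node of layer `l` and a node of layer `l+1`. -/
abbrev MLPEdge (L : ℕ) (h : Fin (L + 1) → ℕ) :=
  Σ l : Fin L, Fin (h l.castSucc) × Fin (h l.succ)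

/-- A path: one node per layer. -/
abbrev MLPPath (L : ℕ) (h : Fin (L + 1) → ℕ) := ∀ l : Fin (L + 1), Fin (h l)

/-- The edge-indicator vector of the path `p` (it has exactly `L` ones). -/
def mlpPathVec (L : ℕ) (h : Fin (L + 1) → ℕ) (p : MLPPath L h) : MLPEdge L h → ℚ :=
  fun e => if p e.1.castSucc = e.2.1 ∧ p e.1.succ = e.2.2 then 1 else 0

/-!
For an edge `e`, let `q e` be the path through `e` that sits at node `0` in every other layer, and
write `v p` for the edge-indicator vector of a path `p`. Changing a path in one layer changes `v p`
by an amount that depends only on that layer and its two neighbours; bringing in the layers of a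
path `a` one at a time therefore gives
`v a = v (q (0, a₀, 0)) + ∑ₗ (v (q (l, aₗ, aₗ₊₁)) - v (q (l, aₗ, 0)))`.
If `e` leaves node `0` and enters a hidden layer, `q e` is also `q` of an edge without this
property; these redundant edges are in bijection (through their targets) with the hidden nodes.
The vectors `v (q e)` of the remaining edges are independent, being unitriangular: `v (q t)` is
nonzero at a remaining edge `s` only if `t = s` or `t` lies in an earlier layer. Hence the rank
is `m - H`.
-/

theorem linearIndependent_of_unitriangular {ι κ R α : Type*} [Fintype ι] [Ring R]
    [Preorder α] [WellFoundedLT α] (v : ι → κ → R) (f : ι → κ) (r : ι → α)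
    (h_diag : ∀ i, v i (f i) = 1) (h_tri : ∀ i j, v j (f i) ≠ 0 → j = i ∨ r j < r i) :
    LinearIndependent R v := by
  rw [Fintype.linearIndependent_iff]
  intro g hg i
  induction hi : r i using WellFoundedLT.induction generalizing i with
  | ind a ih =>
    have hgi := congrFun hg (f i)
    simp only [Finset.sum_apply, Pi.smul_apply, smul_eq_mul, Pi.zero_apply] at hgi
    rwa [Finset.sum_eq_single i, h_diag, mul_one] at hgi
    · intro j _ hji
      by_cases hv : v j (f i) = 0
      · rw [hv, mul_zero]
      · obtain hji' | hlt := h_tri i j hv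
        · exact absurd hji' hji
        · rw [ih _ (hi ▸ hlt) j rfl, zero_mul]
    · simp

lemma card_fin_prod_fst_val_eq_zero {m n : ℕ} (hm : 0 < m) :
    Fintype.card {x : Fin m × Fin n // (x.1 : ℕ) = 0} = n := by
  rw [Fintype.card_subtype]
  have : Finset.univ.filter (fun x : Fin m × Fin n => (x.1 : ℕ) = 0) =
      {⟨0, hm⟩} ×ˢ Finset.univ := by
    ext ⟨i, j⟩
    simp [Fin.ext_iff, eq_comm]
  simp [this]

section MLP

variable {L : ℕ} {h : Fin (L + 1) → ℕ}

lemma mlpPathVec_apply_congr {p q : MLPPath L h} {e : MLPEdge L h}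
    (h₀ : p e.1.castSucc = q e.1.castSucc) (h₁ : p e.1.succ = q e.1.succ) :
    mlpPathVec L h p e = mlpPathVec L h q e := by
  simp only [mlpPathVec, h₀, h₁]

/-- Only edges incident to layer `t` see a change of the path in layer `t`. -/
lemma mlpPathVec_sub_eq_sub {p p' q q' : MLPPath L h} (t : Fin (L + 1))
    (hp : ∀ k ≠ t, p k = p' k) (hq : ∀ k ≠ t, q k = q' k) (ht : p' t = q' t)
    (hpq : ∀ k : Fin (L + 1), (k : ℕ) ≤ t + 1 → (t : ℕ) ≤ k + 1 → p k = q k) :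
    mlpPathVec L h p - mlpPathVec L h p' = mlpPathVec L h q - mlpPathVec L h q' := by
  funext ⟨l, e⟩
  simp only [Pi.sub_apply]
  by_cases hl : l.castSucc = t ∨ l.succ = t
  · have hp'q' : ∀ k : Fin (L + 1), (k : ℕ) ≤ t + 1 → (t : ℕ) ≤ k + 1 → p' k = q' k :=
      fun k hk₀ hk₁ => by
        by_cases hk : k = t
        · exact hk ▸ ht
        · rw [← hp k hk, ← hq k hk, hpq k hk₀ hk₁]
    replace hl : (l : ℕ) = t ∨ (l : ℕ) + 1 = t := by simpa [Fin.ext_iff] using hl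
    have h₀ : (l.castSucc : ℕ) ≤ t + 1 ∧ (t : ℕ) ≤ l.castSucc + 1 := by simp; omega
    have h₁ : (l.succ : ℕ) ≤ t + 1 ∧ (t : ℕ) ≤ l.succ + 1 := by simp; omega
    rw [mlpPathVec_apply_congr (hpq _ h₀.1 h₀.2) (hpq _ h₁.1 h₁.2),
      mlpPathVec_apply_congr (hp'q' _ h₀.1 h₀.2) (hp'q' _ h₁.1 h₁.2)]
  · push Not at hl
    rw [mlpPathVec_apply_congr (hp _ hl.1) (hp _ hl.2),
      mlpPathVec_apply_congr (hq _ hl.1) (hq _ hl.2), sub_self, sub_self]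

def MLPEdge.IsRedundant (e : MLPEdge L h) : Prop := (e.2.1 : ℕ) = 0 ∧ (e.1 : ℕ) + 1 < L

instance : DecidablePred (@MLPEdge.IsRedundant L h) := fun _ => instDecidableAnd

lemma card_isRedundant (hh : ∀ l, 1 ≤ h l) :
    Fintype.card {e : MLPEdge L h // e.IsRedundant} =
      ∑ l : Fin (L + 1), if 0 < (l : ℕ) ∧ (l : ℕ) < L then h l else 0 := by
  rw [Fintype.card_subtype, Finset.card_filter, ← Finset.univ_sigma_univ, Finset.sum_sigma,
    Fin.sum_univ_succ]
  simp only [MLPEdge.IsRedundant, Fin.val_zero, lt_self_iff_false, false_and, if_false, zero_add,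
    Fin.val_succ]
  refine Finset.sum_congr rfl fun l _ => ?_
  by_cases hl : (l : ℕ) + 1 < L
  · simp only [hl, and_true, Nat.succ_pos, if_true]
    rw [← Finset.card_filter, ← Fintype.card_subtype]
    exact card_fin_prod_fst_val_eq_zero (hh _)
  · simp [hl]

variable (hh : ∀ l, 1 ≤ h l)

def MLPEdge.toPath (e : MLPEdge L h) : MLPPath L h := fun k =>
  if hk : k = e.1.castSucc then Fin.cast (by rw [hk]) e.2.1
  else if hk' : k = e.1.succ then Fin.cast (by rw [hk']) e.2.2
  else ⟨0, hh k⟩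

lemma MLPEdge.val_toPath_apply (e : MLPEdge L h) (k : Fin (L + 1)) :
    (e.toPath hh k : ℕ) =
      if (k : ℕ) = e.1 then (e.2.1 : ℕ) else if (k : ℕ) = e.1 + 1 then (e.2.2 : ℕ) else 0 := by
  simp only [MLPEdge.toPath, Fin.ext_iff, Fin.val_castSucc, Fin.val_succ]
  split_ifs <;> rfl

def MLPPath.truncate (a : MLPPath L h) (n : ℕ) : MLPPath L h := fun k =>
  if (k : ℕ) ≤ n then a k else ⟨0, hh k⟩

lemma MLPPath.val_apply_congr (a : MLPPath L h) {k k' : Fin (L + 1)} (hk : (k : ℕ) = k') :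
    (a k : ℕ) = a k' := by
  rw [Fin.ext hk]

lemma MLPPath.mlpPathVec_truncate_succ_sub (a : MLPPath L h) (l : Fin L) :
    mlpPathVec L h (a.truncate hh (l + 1)) - mlpPathVec L h (a.truncate hh l) =
      mlpPathVec L h (MLPEdge.toPath hh ⟨l, a l.castSucc, a l.succ⟩) -
        mlpPathVec L h (MLPEdge.toPath hh ⟨l, a l.castSucc, ⟨0, hh _⟩⟩) := by
  apply mlpPathVec_sub_eq_sub l.succ <;>
    intros <;>
    simp only [MLPPath.truncate, ne_eq, Fin.ext_iff, MLPEdge.val_toPath_apply, Fin.val_succ] at * <;>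
    split_ifs <;>
    first | rfl | omega | exact a.val_apply_congr (by simp; omega)

lemma mlpPathVec_mem_span_toPath (a : MLPPath L h) :
    mlpPathVec L h a ∈
      Submodule.span ℚ (Set.range fun e : MLPEdge L h => mlpPathVec L h (e.toPath hh)) := by
  rcases Nat.eq_zero_or_pos L with rfl | hL
  · rw [Subsingleton.elim (mlpPathVec 0 h a) 0]
    exact zero_mem _
  have h_trunc : ∀ n ≤ L, mlpPathVec L h (a.truncate hh n) ∈
      Submodule.span ℚ (Set.range fun e : MLPEdge L h => mlpPathVec L h (e.toPath hh)) := by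
    intro n
    induction n with
    | zero =>
      intro _
      have h_base : a.truncate hh 0 =
          MLPEdge.toPath hh ⟨⟨0, hL⟩, a (Fin.castSucc ⟨0, hL⟩), ⟨0, hh _⟩⟩ := by
        funext k
        apply Fin.ext
        simp only [MLPPath.truncate, MLPEdge.val_toPath_apply]
        split_ifs <;>
          first | rfl | omega | exact a.val_apply_congr (by simp only [Fin.val_castSucc]; omega)
      rw [h_base]
      exact Submodule.subset_span ⟨_, rfl⟩
    | succ n ih =>
      intro hn
      have h_step := a.mlpPathVec_truncate_succ_sub hh ⟨n, hn⟩
      rw [sub_eq_iff_eq_add'] at h_step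
      rw [h_step]
      exact add_mem (ih (by omega))
        (sub_mem (Submodule.subset_span ⟨_, rfl⟩) (Submodule.subset_span ⟨_, rfl⟩))
  have h_full : a.truncate hh L = a := by
    funext k
    simp [MLPPath.truncate, Nat.le_of_lt_succ k.isLt]
  simpa [h_full] using h_trunc L le_rfl

lemma MLPEdge.exists_not_isRedundant_toPath_eq (e : MLPEdge L h) :
    ∃ s : MLPEdge L h, ¬ s.IsRedundant ∧ s.toPath hh = e.toPath hh := by
  obtain ⟨l, i, j⟩ := e
  by_cases he : (i : ℕ) = 0 ∧ (l : ℕ) + 1 < L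
  swap
  · exact ⟨⟨l, i, j⟩, he, rfl⟩
  obtain ⟨hi, hl⟩ := he
  by_cases hj : (j : ℕ) = 0
  · refine ⟨⟨⟨L - 1, by omega⟩, ⟨0, hh _⟩, ⟨0, hh _⟩⟩,
      fun hs => by simp only [MLPEdge.IsRedundant] at hs; omega, ?_⟩
    funext k
    apply Fin.ext
    simp only [MLPEdge.val_toPath_apply]
    split_ifs <;> omega
  · refine ⟨⟨⟨l + 1, hl⟩, Fin.cast (by congr 1) j, ⟨0, hh _⟩⟩, fun hs => hj hs.1, ?_⟩
    funext k
    apply Fin.ext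
    simp only [MLPEdge.val_toPath_apply, Fin.val_cast]
    split_ifs <;> omega

lemma span_range_mlpPathVec :
    Submodule.span ℚ (Set.range (mlpPathVec L h)) =
      Submodule.span ℚ (Set.range fun s : {e : MLPEdge L h // ¬ e.IsRedundant} =>
        mlpPathVec L h (s.1.toPath hh)) := by
  apply le_antisymm
  · rw [Submodule.span_le]
    rintro _ ⟨a, rfl⟩
    refine Submodule.span_le.2 ?_ (mlpPathVec_mem_span_toPath hh a)
    rintro _ ⟨e, rfl⟩
    obtain ⟨s, hs, hse⟩ := e.exists_not_isRedundant_toPath_eq hh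
    exact Submodule.subset_span ⟨⟨s, hs⟩, congrArg (mlpPathVec L h) hse⟩
  · exact Submodule.span_mono (Set.range_subset_iff.2 fun s => ⟨_, rfl⟩)

lemma MLPEdge.mlpPathVec_toPath_self (e : MLPEdge L h) : mlpPathVec L h (e.toPath hh) e = 1 := by
  simp [mlpPathVec, Fin.ext_iff, MLPEdge.val_toPath_apply]

lemma MLPEdge.eq_or_lt_of_mlpPathVec_toPath_ne_zero {s t : MLPEdge L h} (hs : ¬ s.IsRedundant)
    (hne : mlpPathVec L h (t.toPath hh) s ≠ 0) : t = s ∨ t.1 < s.1 := by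
  obtain ⟨l, i, j⟩ := s
  obtain ⟨l', i', j'⟩ := t
  simp only [mlpPathVec, ne_eq, ite_eq_right_iff, Classical.not_imp, Fin.ext_iff,
    MLPEdge.val_toPath_apply, Fin.val_castSucc, Fin.val_succ] at hne
  simp only [MLPEdge.IsRedundant, not_and, not_lt] at hs
  obtain ⟨⟨hi, hj⟩, -⟩ := hne
  rcases lt_trichotomy l' l with hlt | rfl | hgt
  · exact Or.inr hlt
  · simp only [add_eq_left, one_ne_zero, if_false, if_true] at hi hj
    simp [← Fin.ext hi, ← Fin.ext hj]
  · rw [Fin.lt_def] at hgt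
    rw [if_neg (by omega), if_neg (by omega)] at hi
    have := l'.isLt
    omega

lemma linearIndependent_mlpPathVec_toPath :
    LinearIndependent ℚ fun s : {e : MLPEdge L h // ¬ e.IsRedundant} =>
      mlpPathVec L h (s.1.toPath hh) :=
  linearIndependent_of_unitriangular _ (·.1) (·.1.1) (fun s => s.1.mlpPathVec_toPath_self hh)
    fun s _ hne => (MLPEdge.eq_or_lt_of_mlpPathVec_toPath_ne_zero hh s.2 hne).imp_left Subtype.ext

end MLP

theorem mlp_structure_matrix_rank_general (L : ℕ)
    (h : Fin (L + 1) → ℕ) (hh : ∀ l, 1 ≤ h l) :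
    Module.finrank ℚ (Submodule.span ℚ (Set.range (mlpPathVec L h))) =
      (∑ l : Fin L, h l.castSucc * h l.succ) -
        (∑ l : Fin (L + 1), if 0 < (l : ℕ) ∧ (l : ℕ) < L then h l else 0) := by
  rw [span_range_mlpPathVec hh, finrank_span_eq_card (linearIndependent_mlpPathVec_toPath hh),
    ← card_isRedundant hh, Fintype.card_subtype_compl, Fintype.card_sigma]
  simp only [Fintype.card_prod, Fintype.card_fin]

/-- for an `L`-layer MLP (`L ≥ 2`) with layer widths `h_0,…,h_L ≥ 1`,
the rank over `ℚ` of the structure matrix, whose columns are the edge-indicator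
vectors of all input-to-output paths, equals `m − H`, where `m = ∑_{l=1}^L h_{l−1}h_l`
is the number of weights and `H = ∑_{l=1}^{L−1} h_l` is the number of hidden nodes. -/
theorem mlp_structure_matrix_rank (L : ℕ) (hL : 2 ≤ L)
    (h : Fin (L + 1) → ℕ) (hh : ∀ l, 1 ≤ h l) :
    Module.finrank ℚ (Submodule.span ℚ (Set.range (mlpPathVec L h))) =
      (∑ l : Fin L, h l.castSucc * h l.succ) -
        (∑ l : Fin (L + 1), if 0 < (l : ℕ) ∧ (l : ℕ) < L then h l else 0) :=
  mlp_structure_matrix_rank_general L h hh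
end

section
/- The kernel of the path-value map log-linearization: for an MLP with all weights positive, the map w ↦ (log v_p(w))_{p ∈ P} from R^m (coordinates log w_e) to R^n is linear, and its kernel has dimension exactly H, the number of hidden nodes; the kernel consists exactly of vectors of the form (λ_v − λ_u)_{(u,v) ∈ E} for functions λ on nodes vanishing on input and output nodes. -/
/-- Nodes of the network: a layer index and a node of that layer. -/
abbrev MLPNode (L : ℕ) (h : Fin (L + 1) → ℕ) := Σ l : Fin (L + 1), Fin (h l)

/-- The linear map sending the edge-coordinates `x = (log w_e)_e` to the vector of
path sums `(∑_{e ∈ p} x_e)_p = (log v_p(w))_p`. -/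
noncomputable def pathSumMap (L : ℕ) (h : Fin (L + 1) → ℕ) :
    (MLPEdge L h → ℝ) →ₗ[ℝ] (MLPPath L h → ℝ) :=
  LinearMap.pi fun p => ∑ l : Fin L, LinearMap.proj ⟨l, (p l.castSucc, p l.succ)⟩

/-! On the kernel, the sum of `x` over the first `m` edges of a path depends only on the node the
path visits at layer `m`: splice the first part of one path with the second part of another
through the same node, and compare the two vanishing full sums. This prefix sum is therefore a
potential `λ` on nodes, zero on the input layer (empty sum) and on the output layer (full sum), and
`x = dλ` because consecutive prefix sums differ by one edge. Conversely `dλ` telescopes to zero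
along every path. So the kernel is the image of `d` on functions supported on hidden nodes, where
`d` is injective since `λ` is recovered from `dλ` by telescoping from the input layer. -/

section

variable {L : ℕ} {h : Fin (L + 1) → ℕ}

lemma pathSumMap_apply (x : MLPEdge L h → ℝ) (p : MLPPath L h) :
    pathSumMap L h x p = ∑ l : Fin L, x ⟨l, (p l.castSucc, p l.succ)⟩ := by
  simp [pathSumMap]

def prefixSum (x : MLPEdge L h → ℝ) (p : MLPPath L h) (m : ℕ) : ℝ :=
  ∑ k ∈ Finset.univ.filter (fun k : Fin L => (k : ℕ) < m), x ⟨k, (p k.castSucc, p k.succ)⟩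

@[simp]
lemma prefixSum_zero (x : MLPEdge L h → ℝ) (p : MLPPath L h) : prefixSum x p 0 = 0 := by
  simp [prefixSum]

@[simp]
lemma prefixSum_zero_left (p : MLPPath L h) (m : ℕ) : prefixSum 0 p m = 0 := by
  simp [prefixSum]

lemma prefixSum_succ (x : MLPEdge L h → ℝ) (p : MLPPath L h) (l : Fin L) :
    prefixSum x p (l + 1) = prefixSum x p l + x ⟨l, (p l.castSucc, p l.succ)⟩ := by
  have : Finset.univ.filter (fun k : Fin L => (k : ℕ) < l + 1) =
      insert l (Finset.univ.filter fun k : Fin L => (k : ℕ) < l) := by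
    ext k; simp [le_iff_eq_or_lt, Fin.val_inj]
  rw [prefixSum, prefixSum, this, Finset.sum_insert (by simp), add_comm]

def suffixSum (x : MLPEdge L h → ℝ) (p : MLPPath L h) (m : ℕ) : ℝ :=
  ∑ k ∈ Finset.univ.filter (fun k : Fin L => ¬ (k : ℕ) < m),
    x ⟨k, (p k.castSucc, p k.succ)⟩

lemma pathSumMap_eq_prefixSum_add_suffixSum (x : MLPEdge L h → ℝ) (p : MLPPath L h) (m : ℕ) :
    pathSumMap L h x p = prefixSum x p m + suffixSum x p m := by
  rw [pathSumMap_apply, prefixSum, suffixSum, Finset.sum_filter_add_sum_filter_not]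

lemma pathSumMap_eq_prefixSum_last (x : MLPEdge L h → ℝ) (p : MLPPath L h) :
    pathSumMap L h x p = prefixSum x p (Fin.last L) := by
  simp [pathSumMap_eq_prefixSum_add_suffixSum x p L, suffixSum]

lemma prefixSum_eq_of_apply_eq {x : MLPEdge L h → ℝ} (hx : x ∈ LinearMap.ker (pathSumMap L h))
    {p q : MLPPath L h} {m : Fin (L + 1)} (hpq : p m = q m) :
    prefixSum x p m = prefixSum x q m := by
  set r : MLPPath L h := fun k => if (k : ℕ) < m then p k else q k
  have hrp : ∀ k : Fin (L + 1), k ≤ m → r k = p k := by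
    intro k hk
    rcases hk.lt_or_eq with hk | rfl
    · simp [r, hk]
    · simp [r, hpq]
  have hrq : ∀ k : Fin (L + 1), m ≤ k → r k = q k := by
    intro k hk
    simp [r, not_lt.2 hk]
  have hprefix : prefixSum x r m = prefixSum x p m := by
    refine Finset.sum_congr rfl fun k hk => ?_
    simp only [Finset.mem_filter, Finset.mem_univ, true_and] at hk
    rw [hrp _ (by simp [Fin.le_def]; omega), hrp _ (by simp [Fin.le_def]; omega)]
  have hsuffix : suffixSum x r m = suffixSum x q m := by
    refine Finset.sum_congr rfl fun k hk => ?_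
    simp only [Finset.mem_filter, Finset.mem_univ, true_and] at hk
    rw [hrq _ (by simp [Fin.le_def]; omega), hrq _ (by simp [Fin.le_def]; omega)]
  have hr := pathSumMap_eq_prefixSum_add_suffixSum x r m
  have hq := pathSumMap_eq_prefixSum_add_suffixSum x q m
  rw [LinearMap.mem_ker] at hx
  simp only [hx, Pi.zero_apply] at hr hq
  linarith

def nodeCoboundary (L : ℕ) (h : Fin (L + 1) → ℕ) :
    (MLPNode L h → ℝ) →ₗ[ℝ] (MLPEdge L h → ℝ) :=
  LinearMap.pi fun e =>
    LinearMap.proj ⟨e.1.succ, e.2.2⟩ - LinearMap.proj ⟨e.1.castSucc, e.2.1⟩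

lemma nodeCoboundary_apply (lam : MLPNode L h → ℝ) (e : MLPEdge L h) :
    nodeCoboundary L h lam e = lam ⟨e.1.succ, e.2.2⟩ - lam ⟨e.1.castSucc, e.2.1⟩ := rfl

lemma prefixSum_nodeCoboundary (lam : MLPNode L h → ℝ) (p : MLPPath L h) (m : Fin (L + 1)) :
    prefixSum (nodeCoboundary L h lam) p m = lam ⟨m, p m⟩ - lam ⟨0, p 0⟩ := by
  induction m using Fin.induction with
  | zero => simp
  | succ l ih =>
    rw [Fin.val_succ, prefixSum_succ, ← Fin.val_castSucc, ih, nodeCoboundary_apply]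
    ring

lemma nodeCoboundary_mem_ker {lam : MLPNode L h → ℝ} (h0 : ∀ i, lam ⟨0, i⟩ = 0)
    (hlast : ∀ i, lam ⟨Fin.last L, i⟩ = 0) :
    nodeCoboundary L h lam ∈ LinearMap.ker (pathSumMap L h) := by
  rw [LinearMap.mem_ker]
  ext p
  rw [pathSumMap_eq_prefixSum_last, prefixSum_nodeCoboundary, h0, hlast, sub_zero, Pi.zero_apply]

def pathThrough (hh : ∀ l, 1 ≤ h l) (n : MLPNode L h) : MLPPath L h :=
  Function.update (fun l => ⟨0, hh l⟩) n.1 n.2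

@[simp]
lemma pathThrough_apply_self (hh : ∀ l, 1 ≤ h l) (n : MLPNode L h) :
    pathThrough hh n n.1 = n.2 := by
  simp [pathThrough]

def potential (hh : ∀ l, 1 ≤ h l) (x : MLPEdge L h → ℝ) (n : MLPNode L h) : ℝ :=
  prefixSum x (pathThrough hh n) n.1

lemma potential_eq_prefixSum (hh : ∀ l, 1 ≤ h l) {x : MLPEdge L h → ℝ}
    (hx : x ∈ LinearMap.ker (pathSumMap L h)) (p : MLPPath L h) (m : Fin (L + 1)) :
    potential hh x ⟨m, p m⟩ = prefixSum x p m :=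
  prefixSum_eq_of_apply_eq hx (pathThrough_apply_self hh ⟨m, p m⟩)

lemma potential_zero (hh : ∀ l, 1 ≤ h l) (x : MLPEdge L h → ℝ) (i : Fin (h 0)) :
    potential hh x ⟨0, i⟩ = 0 :=
  prefixSum_zero x _

lemma potential_last (hh : ∀ l, 1 ≤ h l) {x : MLPEdge L h → ℝ}
    (hx : x ∈ LinearMap.ker (pathSumMap L h)) (i : Fin (h (Fin.last L))) :
    potential hh x ⟨Fin.last L, i⟩ = 0 := by
  rw [potential, ← pathSumMap_eq_prefixSum_last, LinearMap.mem_ker.1 hx, Pi.zero_apply]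

lemma nodeCoboundary_potential (hh : ∀ l, 1 ≤ h l) {x : MLPEdge L h → ℝ}
    (hx : x ∈ LinearMap.ker (pathSumMap L h)) : nodeCoboundary L h (potential hh x) = x := by
  ext ⟨l, i, j⟩
  set p := Function.update (pathThrough hh ⟨l.castSucc, i⟩) l.succ j
  have hpi : p l.castSucc = i := by
    simp [p, pathThrough, Function.update_of_ne Fin.castSucc_lt_succ.ne]
  have hpj : p l.succ = j := by simp [p]
  rw [nodeCoboundary_apply, ← hpi, ← hpj, potential_eq_prefixSum hh hx,
    potential_eq_prefixSum hh hx, Fin.val_succ, prefixSum_succ, Fin.val_castSucc]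
  ring

theorem mem_ker_pathSumMap_iff (hh : ∀ l, 1 ≤ h l) (x : MLPEdge L h → ℝ) :
    x ∈ LinearMap.ker (pathSumMap L h) ↔
      ∃ lam : MLPNode L h → ℝ,
        (∀ i, lam ⟨0, i⟩ = 0) ∧ (∀ i, lam ⟨Fin.last L, i⟩ = 0) ∧
          nodeCoboundary L h lam = x := by
  refine ⟨fun hx => ?_, ?_⟩
  · exact ⟨potential hh x, potential_zero hh x, potential_last hh hx,
      nodeCoboundary_potential hh hx⟩
  · rintro ⟨lam, h0, hlast, rfl⟩
    exact nodeCoboundary_mem_ker h0 hlast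

abbrev HiddenNode (L : ℕ) (h : Fin (L + 1) → ℕ) :=
  {n : MLPNode L h // 0 < (n.1 : ℕ) ∧ (n.1 : ℕ) < L}

lemma layer_eq_zero_or_last_of_not_hidden {n : MLPNode L h}
    (hn : ¬ (0 < (n.1 : ℕ) ∧ (n.1 : ℕ) < L)) : n.1 = 0 ∨ n.1 = Fin.last L := by
  have := n.1.isLt
  rw [Fin.ext_iff, Fin.ext_iff, Fin.val_last, Fin.val_zero]
  omega

noncomputable def hiddenCoboundary (L : ℕ) (h : Fin (L + 1) → ℕ) :
    (HiddenNode L h → ℝ) →ₗ[ℝ] (MLPEdge L h → ℝ) :=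
  nodeCoboundary L h ∘ₗ Function.ExtendByZero.linearMap ℝ Subtype.val

lemma hiddenCoboundary_apply (μ : HiddenNode L h → ℝ) :
    hiddenCoboundary L h μ = nodeCoboundary L h (Function.extend Subtype.val μ 0) := rfl

lemma extend_val_eq_zero_of_not_hidden (μ : HiddenNode L h → ℝ) {n : MLPNode L h}
    (hn : ¬ (0 < (n.1 : ℕ) ∧ (n.1 : ℕ) < L)) : Function.extend Subtype.val μ 0 n = 0 :=
  Function.extend_apply' _ _ _ fun ⟨m, hm⟩ => hn (hm ▸ m.2)

lemma range_hiddenCoboundary (hh : ∀ l, 1 ≤ h l) :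
    LinearMap.range (hiddenCoboundary L h) = LinearMap.ker (pathSumMap L h) := by
  ext x
  rw [mem_ker_pathSumMap_iff hh]
  constructor
  · rintro ⟨μ, rfl⟩
    refine ⟨Function.extend Subtype.val μ 0, fun i => ?_, fun i => ?_, rfl⟩ <;>
      exact extend_val_eq_zero_of_not_hidden μ (by simp)
  · rintro ⟨lam, h0, hlast, rfl⟩
    refine ⟨lam ∘ Subtype.val, ?_⟩
    rw [hiddenCoboundary_apply]
    congr 1
    funext n
    by_cases hn : 0 < (n.1 : ℕ) ∧ (n.1 : ℕ) < L
    · exact Subtype.val_injective.extend_apply _ _ ⟨n, hn⟩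
    · rw [extend_val_eq_zero_of_not_hidden _ hn]
      obtain ⟨l, i⟩ := n
      rcases layer_eq_zero_or_last_of_not_hidden hn with rfl | rfl
      exacts [(h0 i).symm, (hlast i).symm]

lemma hiddenCoboundary_injective (hh : ∀ l, 1 ≤ h l) :
    Function.Injective (hiddenCoboundary L h) := by
  refine (injective_iff_map_eq_zero _).2 fun μ hμ => funext fun ⟨⟨m, i⟩, hn⟩ => ?_
  have htelescope :=
    prefixSum_nodeCoboundary (Function.extend Subtype.val μ 0) (pathThrough hh ⟨m, i⟩) m
  rw [← hiddenCoboundary_apply, hμ, pathThrough_apply_self, prefixSum_zero_left,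
    Subtype.val_injective.extend_apply μ 0 ⟨⟨m, i⟩, hn⟩,
    extend_val_eq_zero_of_not_hidden μ (by simp), sub_zero] at htelescope
  exact htelescope.symm

end

lemma Fintype.card_sigma_subtype_fst {ι : Type*} [Fintype ι] {κ : ι → Type*}
    [∀ i, Fintype (κ i)] (P : ι → Prop) [DecidablePred P] :
    Fintype.card {x : Σ i, κ i // P x.1} = ∑ i, if P i then Fintype.card (κ i) else 0 := by
  rw [Fintype.card_subtype, Finset.card_filter, Fintype.sum_sigma]
  simp [apply_ite]

theorem path_value_log_linearization_kernel_general (L : ℕ)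
    (h : Fin (L + 1) → ℕ) (hh : ∀ l, 1 ≤ h l) :
    -- linearity: on positive weights, `pathSumMap` applied to `(log w_e)_e`
    -- computes `(log v_p(w))_p`
    (∀ w : MLPEdge L h → ℝ, (∀ e, 0 < w e) → ∀ p : MLPPath L h,
      pathSumMap L h (fun e => Real.log (w e)) p =
        Real.log (∏ l : Fin L, w ⟨l, (p l.castSucc, p l.succ)⟩)) ∧
    -- kernel characterization
    (∀ x : MLPEdge L h → ℝ,
      x ∈ LinearMap.ker (pathSumMap L h) ↔
        ∃ lam : MLPNode L h → ℝ,
          (∀ i : Fin (h 0), lam ⟨0, i⟩ = 0) ∧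
          (∀ i : Fin (h (Fin.last L)), lam ⟨Fin.last L, i⟩ = 0) ∧
          (∀ e : MLPEdge L h,
            x e = lam ⟨e.1.succ, e.2.2⟩ - lam ⟨e.1.castSucc, e.2.1⟩)) ∧
    -- kernel dimension is the number of hidden nodes
    Module.finrank ℝ (LinearMap.ker (pathSumMap L h)) =
      ∑ l : Fin (L + 1), if 0 < (l : ℕ) ∧ (l : ℕ) < L then h l else 0 := by
  refine ⟨fun w hw p => ?_, fun x => ?_, ?_⟩
  · rw [pathSumMap_apply, Real.log_prod fun l _ => (hw _).ne']
  · simp_rw [mem_ker_pathSumMap_iff hh, funext_iff, nodeCoboundary_apply, eq_comm]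
  · rw [← range_hiddenCoboundary hh,
      LinearMap.finrank_range_of_inj (hiddenCoboundary_injective hh),
      Module.finrank_fintype_fun_eq_card]
    exact (Fintype.card_sigma_subtype_fst (κ := fun l => Fin (h l))
      fun l => 0 < (l : ℕ) ∧ (l : ℕ) < L).trans (by simp only [Fintype.card_fin])

/-- for an MLP with all weights positive, `w ↦ (log v_p(w))_p` is linear
in the coordinates `log w_e` (it is the linear map `pathSumMap`); the kernel of this
linear map consists exactly of the vectors of the form `(λ_v − λ_u)_{(u,v) ∈ E}` for
functions `λ` on nodes vanishing on the input and output layers, and it has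
dimension exactly `H`, the number of hidden nodes. -/
theorem path_value_log_linearization_kernel (L : ℕ) (hL : 2 ≤ L)
    (h : Fin (L + 1) → ℕ) (hh : ∀ l, 1 ≤ h l) :
    -- linearity: on positive weights, `pathSumMap` applied to `(log w_e)_e`
    -- computes `(log v_p(w))_p`
    (∀ w : MLPEdge L h → ℝ, (∀ e, 0 < w e) → ∀ p : MLPPath L h,
      pathSumMap L h (fun e => Real.log (w e)) p =
        Real.log (∏ l : Fin L, w ⟨l, (p l.castSucc, p l.succ)⟩)) ∧
    -- kernel characterization
    (∀ x : MLPEdge L h → ℝ,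
      x ∈ LinearMap.ker (pathSumMap L h) ↔
        ∃ lam : MLPNode L h → ℝ,
          (∀ i : Fin (h 0), lam ⟨0, i⟩ = 0) ∧
          (∀ i : Fin (h (Fin.last L)), lam ⟨Fin.last L, i⟩ = 0) ∧
          (∀ e : MLPEdge L h,
            x e = lam ⟨e.1.succ, e.2.2⟩ - lam ⟨e.1.castSucc, e.2.1⟩)) ∧
    -- kernel dimension is the number of hidden nodes
    Module.finrank ℝ (LinearMap.ker (pathSumMap L h)) =
      ∑ l : Fin (L + 1), if 0 < (l : ℕ) ∧ (l : ℕ) < L then h l else 0 :=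
  path_value_log_linearization_kernel_general L h hh
end

section
/- Two positive weight vectors on a fully connected layered network are related by a positive scaling operator if and only if all their path values are equal: for w, w' ∈ (R^+)^m, (∃ c: Hidden → R^+ such that w'_{(u,v)} = (c_v/c_u) w_{(u,v)} for all edges, with c ≡ 1 on input/output nodes) ⟺ (for every input-to-output path p, ∏_{e ∈ p} w_e = ∏_{e ∈ p} w'_e). -/
/-!
Pass to the ratio `r = w' / w`: a scaling is a potential `c` with
`r_l(i, j) = c_{l+1}(j) / c_l(i)` and `c = 1` on the outer layers, and equal path values say that
the product of `r` along every path is `1`. One direction is a telescoping product. For the other,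
take `c_l(i)` to be the product of `r` along the path that stays at node `0` up to layer `l` and
reaches `i` at layer `l`. The path through the edge `(i, j)` and the path that only deviates to `j`
at layer `l + 1` can be completed by the same tail, so their two path identities give
`c_l(i) r_l(i, j) = c_{l+1}(j)`.
-/

/-- Weight space of a layered network: `w l i j` is the weight on the edge from
node `i` in layer `l` to node `j` in layer `l+1`. -/
abbrev Weights := ℕ → ℕ → ℕ → ℝ

open Finset

theorem Finset.prod_range_div₀ {G : Type*} [CommGroupWithZero G] {f : ℕ → G}
    (hf : ∀ k, f k ≠ 0) (n : ℕ) : ∏ k ∈ range n, f (k + 1) / f k = f n / f 0 := by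
  simpa using congrArg Units.val (prod_range_div (fun k => Units.mk0 (f k) (hf k)) n)

lemma prod_path_eq_of_scaling {w w' : Weights} {c : ℕ → ℕ → ℝ} {p : ℕ → ℕ} {n : ℕ}
    (hc : ∀ l i, c l i ≠ 0)
    (hscale : ∀ l < n,
      w' l (p l) (p (l + 1)) = c (l + 1) (p (l + 1)) / c l (p l) * w l (p l) (p (l + 1))) :
    ∏ l ∈ range n, w' l (p l) (p (l + 1)) =
      c n (p n) / c 0 (p 0) * ∏ l ∈ range n, w l (p l) (p (l + 1)) := by
  rw [prod_congr rfl fun l hl => hscale l (mem_range.1 hl), prod_mul_distrib,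
    prod_range_div₀ fun k => hc k (p k)]

section Potential

variable {L : ℕ} {h : ℕ → ℕ} {r : Weights}

lemma update_lt_of_lt {p : ℕ → ℕ} (hp : ∀ k, p k < h k) {l i : ℕ} (hi : i < h l) (k : ℕ) :
    Function.update p l i k < h k := by
  rcases eq_or_ne k l with rfl | hk <;> simp [*]

lemma prod_path_pos (hr : ∀ l i j, l < L → i < h l → j < h (l + 1) → 0 < r l i j)
    {p : ℕ → ℕ} (hp : ∀ k ≤ L, p k < h k) {s : Finset ℕ} (hs : ∀ k ∈ s, k < L) :
    0 < ∏ k ∈ s, r k (p k) (p (k + 1)) :=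
  prod_pos fun k hk => hr k _ _ (hs k hk) (hp k (hs k hk).le) (hp (k + 1) (hs k hk))

variable (L h r) in
/-- The product of `r` along the path that is at node `0` before layer `l` and at `i` in layer `l`;
set to `1` off the network so that it is positive everywhere. -/
noncomputable def prefixPotential (l i : ℕ) : ℝ :=
  if l ≤ L ∧ i < h l then
    ∏ k ∈ range l,
      r k (Function.update (0 : ℕ → ℕ) l i k) (Function.update (0 : ℕ → ℕ) l i (k + 1))
  else 1

lemma prefixPotential_pos (hr : ∀ l i j, l < L → i < h l → j < h (l + 1) → 0 < r l i j)
    (hh : ∀ l, 0 < h l) (l i : ℕ) : 0 < prefixPotential L h r l i := by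
  unfold prefixPotential
  split_ifs with hli
  · exact prod_path_pos hr (fun k _ => update_lt_of_lt hh hli.2 k)
      fun k hk => (mem_range.1 hk).trans_le hli.1
  · exact one_pos

lemma prefixPotential_zero (i : ℕ) : prefixPotential L h r 0 i = 1 := by
  simp [prefixPotential]

lemma prefixPotential_last (hh : ∀ l, 0 < h l)
    (hpath : ∀ p : ℕ → ℕ, (∀ l, l ≤ L → p l < h l) →
      ∏ l ∈ range L, r l (p l) (p (l + 1)) = 1) (i : ℕ) :
    prefixPotential L h r L i = 1 := by
  unfold prefixPotential
  split_ifs with hi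
  · exact hpath _ fun k _ => update_lt_of_lt hh hi.2 k
  · rfl

lemma prefixPotential_mul (hr : ∀ l i j, l < L → i < h l → j < h (l + 1) → 0 < r l i j)
    (hh : ∀ l, 0 < h l)
    (hpath : ∀ p : ℕ → ℕ, (∀ l, l ≤ L → p l < h l) →
      ∏ l ∈ range L, r l (p l) (p (l + 1)) = 1)
    {l i j : ℕ} (hl : l < L) (hi : i < h l) (hj : j < h (l + 1)) :
    prefixPotential L h r l i * r l i j = prefixPotential L h r (l + 1) j := by
  set p := Function.update (Function.update (0 : ℕ → ℕ) l i) (l + 1) j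
  set q := Function.update (0 : ℕ → ℕ) (l + 1) j
  have hp : ∀ k, p k < h k := update_lt_of_lt (update_lt_of_lt hh hi) hj
  have hq : ∀ k, q k < h k := update_lt_of_lt hh hj
  have split (s : ℕ → ℕ) : ∏ k ∈ range L, r k (s k) (s (k + 1)) =
      (∏ k ∈ range (l + 1), r k (s k) (s (k + 1))) *
        ∏ k ∈ Ico (l + 1) L, r k (s k) (s (k + 1)) :=
    (prod_range_mul_prod_Ico _ hl).symm
  have head_p : ∏ k ∈ range (l + 1), r k (p k) (p (k + 1)) =
      prefixPotential L h r l i * r l i j := by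
    rw [prod_range_succ, prefixPotential, if_pos ⟨hl.le, hi⟩]
    congr 1
    · refine prod_congr rfl fun k hk => ?_
      have hk : k < l := mem_range.1 hk
      simp only [p, Function.update_apply]
      split_ifs <;> first | rfl | omega
    · simp [p]
  have head_q : ∏ k ∈ range (l + 1), r k (q k) (q (k + 1)) =
      prefixPotential L h r (l + 1) j := by
    rw [prefixPotential, if_pos ⟨hl, hj⟩]
  have tail : ∏ k ∈ Ico (l + 1) L, r k (p k) (p (k + 1)) =
      ∏ k ∈ Ico (l + 1) L, r k (q k) (q (k + 1)) := by
    refine prod_congr rfl fun k hk => ?_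
    have hk : l + 1 ≤ k := (mem_Ico.1 hk).1
    simp only [p, q, Function.update_apply]
    split_ifs <;> first | rfl | omega
  have tail_pos : 0 < ∏ k ∈ Ico (l + 1) L, r k (q k) (q (k + 1)) :=
    prod_path_pos hr (fun k _ => hq k) fun k hk => (mem_Ico.1 hk).2
  have hp1 := hpath p fun k _ => hp k
  have hq1 := hpath q fun k _ => hq k
  rw [split, head_p, tail] at hp1
  rw [split, head_q] at hq1
  exact mul_right_cancel₀ tail_pos.ne' (hp1.trans hq1.symm)

lemma exists_scaling_of_prod_path_eq_one
    (hr : ∀ l i j, l < L → i < h l → j < h (l + 1) → 0 < r l i j) (hh : ∀ l, 0 < h l)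
    (hpath : ∀ p : ℕ → ℕ, (∀ l, l ≤ L → p l < h l) →
      ∏ l ∈ range L, r l (p l) (p (l + 1)) = 1) :
    ∃ c : ℕ → ℕ → ℝ, (∀ l i, 0 < c l i) ∧ (∀ i, c 0 i = 1) ∧ (∀ i, c L i = 1) ∧
      ∀ l i j, l < L → i < h l → j < h (l + 1) → r l i j = c (l + 1) j / c l i :=
  ⟨prefixPotential L h r, prefixPotential_pos hr hh, prefixPotential_zero,
    prefixPotential_last hh hpath, fun l i j hl hi hj => by
      rw [← prefixPotential_mul hr hh hpath hl hi hj,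
        mul_div_cancel_left₀ _ (prefixPotential_pos hr hh l i).ne']⟩

end Potential

theorem positive_scaling_iff_equal_path_values_general (L : ℕ)
    (h : ℕ → ℕ) (hh : ∀ l, 1 ≤ h l) (w w' : Weights)
    (hw : ∀ l i j, l < L → i < h l → j < h (l + 1) → 0 < w l i j)
    (hw' : ∀ l i j, l < L → i < h l → j < h (l + 1) → 0 < w' l i j) :
    (∃ c : ℕ → ℕ → ℝ,
        (∀ l i, 0 < c l i) ∧ (∀ i, c 0 i = 1) ∧ (∀ i, c L i = 1) ∧
        (∀ l i j, l < L → i < h l → j < h (l + 1) →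
          w' l i j = (c (l + 1) j / c l i) * w l i j)) ↔
      (∀ p : ℕ → ℕ, (∀ l, l ≤ L → p l < h l) →
        ∏ l ∈ Finset.range L, w l (p l) (p (l + 1)) =
          ∏ l ∈ Finset.range L, w' l (p l) (p (l + 1))) := by
  constructor
  · rintro ⟨c, hc, hc0, hcL, hscale⟩ p hp
    rw [prod_path_eq_of_scaling (fun l i => (hc l i).ne') fun l hl =>
      hscale l _ _ hl (hp l hl.le) (hp (l + 1) hl), hc0, hcL, div_one, one_mul]
  · intro hpath
    obtain ⟨c, hc, hc0, hcL, hratio⟩ := exists_scaling_of_prod_path_eq_one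
      (r := fun l i j => w' l i j / w l i j)
      (fun l i j hl hi hj => div_pos (hw' l i j hl hi hj) (hw l i j hl hi hj)) hh
      fun p hp => by
        rw [prod_div_distrib, ← hpath p hp,
          div_self (prod_path_pos hw hp fun k hk => mem_range.1 hk).ne']
    refine ⟨c, hc, hc0, hcL, fun l i j hl hi hj => ?_⟩
    rw [← hratio l i j hl hi hj, div_mul_cancel₀ _ (hw l i j hl hi hj).ne']

/-- two positive weight vectors on a fully connected `L`-layer network
(`L ≥ 2`, layer widths `h l ≥ 1`) are related by a positive scaling operator iff all
their path values are equal. -/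
theorem positive_scaling_iff_equal_path_values (L : ℕ) (hL : 2 ≤ L)
    (h : ℕ → ℕ) (hh : ∀ l, 1 ≤ h l) (w w' : Weights)
    (hw : ∀ l i j, l < L → i < h l → j < h (l + 1) → 0 < w l i j)
    (hw' : ∀ l i j, l < L → i < h l → j < h (l + 1) → 0 < w' l i j) :
    (∃ c : ℕ → ℕ → ℝ,
        (∀ l i, 0 < c l i) ∧ (∀ i, c 0 i = 1) ∧ (∀ i, c L i = 1) ∧
        (∀ l i j, l < L → i < h l → j < h (l + 1) →
          w' l i j = (c (l + 1) j / c l i) * w l i j)) ↔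
      (∀ p : ℕ → ℕ, (∀ l, l ≤ L → p l < h l) →
        ∏ l ∈ Finset.range L, w l (p l) (p (l + 1)) =
          ∏ l ∈ Finset.range L, w' l (p l) (p (l + 1))) :=
  positive_scaling_iff_equal_path_values_general L h hh w w' hw hw'
end

section
/- Scale-homogeneity of ReLU propagates invariance to outputs: under the hypotheses of the previous statement, the network outputs are equal: N_w^k(x) = N_{w'}^k(x) for every input x and output index k. -/
/-- Post-ReLU activation values: `act h w x l i` is the value `o^l_i(x)` of node `i`
in layer `l`, with `o^0 = x` and `o^{l+1}_j = σ(∑_i w^l(i,j) o^l_i)`, `σ = max(·,0)`. -/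
noncomputable def act (h : ℕ → ℕ) (w : Weights) (x : ℕ → ℝ) : ℕ → ℕ → ℝ
  | 0, i => x i
  | l + 1, j => max 0 (∑ i ∈ Finset.range (h l), w l i j * act h w x l i)

/-- The `k`-th network output: the output layer has no ReLU, so
`N_w^k(x) = ∑_{i} w^L(i, k) · o^{L−1}_i(x)`. -/
noncomputable def netOut (L : ℕ) (h : ℕ → ℕ) (w : Weights) (x : ℕ → ℝ) (k : ℕ) : ℝ :=
  ∑ i ∈ Finset.range (h (L - 1)), w (L - 1) i k * act h w x (L - 1) i

noncomputable def preAct (h : ℕ → ℕ) (w : Weights) (x : ℕ → ℝ) (l j : ℕ) : ℝ :=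
  ∑ i ∈ Finset.range (h l), w l i j * act h w x l i

section Scaling

variable {h : ℕ → ℕ} {w w' : Weights} {c : ℕ → ℕ → ℝ} {x : ℕ → ℝ}

theorem act_succ (l j : ℕ) : act h w x (l + 1) j = max 0 (preAct h w x l j) := rfl

theorem netOut_eq_preAct (L k : ℕ) : netOut L h w x k = preAct h w x (L - 1) k := rfl

theorem preAct_eq_mul_of_scaling {l j : ℕ} (hc : ∀ i < h l, c l i ≠ 0)
    (hact : ∀ i < h l, act h w x l i = c l i * act h w' x l i)
    (hw : ∀ i < h l, w l i j = c (l + 1) j / c l i * w' l i j) :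
    preAct h w x l j = c (l + 1) j * preAct h w' x l j := by
  rw [preAct, preAct, Finset.mul_sum]
  refine Finset.sum_congr rfl fun i hi => ?_
  have hi : i < h l := Finset.mem_range.mp hi
  rw [hw i hi, hact i hi]
  field_simp [hc i hi]

/-- ReLU is positively homogeneous, so the factor `c^l_i` carried by the incoming weights of
a node passes through its activation, and is then cancelled by the `1 / c^l_i` on its
outgoing weights. -/
theorem act_eq_mul_of_scaling {n : ℕ} (hc : ∀ l i, 0 < c l i) (hc0 : ∀ i, c 0 i = 1)
    (hscale : ∀ l i j, l < n → i < h l → j < h (l + 1) →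
      w l i j = c (l + 1) j / c l i * w' l i j) :
    ∀ l ≤ n, ∀ i < h l, act h w x l i = c l i * act h w' x l i := by
  intro l
  induction l with
  | zero => intro _ i _; simp [act, hc0]
  | succ l ih =>
    intro hl j hj
    have hpre : preAct h w x l j = c (l + 1) j * preAct h w' x l j :=
      preAct_eq_mul_of_scaling (fun i _ => (hc l i).ne') (ih (by omega))
        (fun i hi => hscale l i j (by omega) hi hj)
    rw [act_succ, act_succ, hpre, mul_max_of_nonneg _ _ (hc (l + 1) j).le, mul_zero]

end Scaling

theorem positive_scaling_preserves_network_outputs_general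
    (L : ℕ) (hL : 2 ≤ L) (h : ℕ → ℕ)
    (w w' : Weights) (c : ℕ → ℕ → ℝ)
    (hc : ∀ l i, 0 < c l i) (hc0 : ∀ i, c 0 i = 1) (hcL : ∀ i, c L i = 1)
    (hscale : ∀ l i j, l < L → i < h l → j < h (l + 1) →
      w l i j = (c (l + 1) j / c l i) * w' l i j) :
    ∀ (x : ℕ → ℝ) (k : ℕ), k < h L → netOut L h w x k = netOut L h w' x k := by
  intro x k hk
  obtain ⟨m, rfl⟩ : ∃ m, L = m + 1 := ⟨L - 1, by omega⟩
  rw [netOut_eq_preAct, netOut_eq_preAct, Nat.add_sub_cancel,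
    preAct_eq_mul_of_scaling (fun i _ => (hc m i).ne')
      (act_eq_mul_of_scaling hc hc0 hscale m m.le_succ)
      (fun i hi => hscale m i k m.lt_succ_self hi hk), hcL, one_mul]

/-- if the weight vectors `w, w'` are related by a positive scaling
operator with node constants `c^l_i > 0` (equal to `1` on the input and output
layers), then the networks compute the same outputs: `N_w^k(x) = N_{w'}^k(x)` for
every input `x` and output index `k`. -/
theorem positive_scaling_preserves_network_outputs
    (L : ℕ) (hL : 2 ≤ L) (h : ℕ → ℕ) (hh : ∀ l, 1 ≤ h l)
    (w w' : Weights) (c : ℕ → ℕ → ℝ)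
    (hc : ∀ l i, 0 < c l i) (hc0 : ∀ i, c 0 i = 1) (hcL : ∀ i, c L i = 1)
    (hscale : ∀ l i j, l < L → i < h l → j < h (l + 1) →
      w l i j = (c (l + 1) j / c l i) * w' l i j) :
    ∀ (x : ℕ → ℝ) (k : ℕ), k < h L → netOut L h w x k = netOut L h w' x k :=
  positive_scaling_preserves_network_outputs_general L hL h w w' c hc hc0 hcL hscale
end
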